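/- Let 0 < a ≤ b ≤ π − σ. Suppose u, f are as in the context (u is 2π-periodic, twice continuously differentiable, f = −u'' + i·q·W·u − E·u) for some q > 0 and E ∈ ℝ, and additionally f(x) = 0 for every x ∈ [−π,π] with |x| < σ + a or |x| > σ + b. Then ∫_{−π}^{π} W·|f|·|u| ≤ C₀ · (b/a)^{β/2} · q⁻¹ · ∫_{−π}^{π} |f|². -/

import Mathlib

open Real MeasureTheory intervalIntegral

/-- The model damping profile `V(x) = 0` for `|x| ≤ σ`, `V(x) = (|x| - σ)^β` otherwise
(used only on the period `[-π, π]`). -/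
noncomputable def dampV (σ β : ℝ) (x : ℝ) : ℝ :=
  if |x| ≤ σ then 0 else (|x| - σ) ^ β

open ComplexConjugate Set

/-!
Pairing the equation with `ū` and taking imaginary parts gives
`q ∫ W |u|² = Im ∫ ū f ≤ ∫ |f| |u|`, because `∫ ū u'' = -∫ |u'|²` is real by periodicity.
On the support of `f` we have `a^β / C₀ ≤ W ≤ C₀ b^β`. The lower bound gives
`∫ |f| |u| ≤ (C₀ / a^β)^{1/2} ‖f‖₂ ‖√W u‖₂`, hence `‖√W u‖₂ ≤ q⁻¹ (C₀ / a^β)^{1/2} ‖f‖₂`;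
the upper bound and Cauchy–Schwarz give `∫ W |f| |u| ≤ (C₀ b^β)^{1/2} ‖f‖₂ ‖√W u‖₂`.
-/

section WeightedEstimate

variable {α : Type*} [MeasurableSpace α] {μ : Measure α}

theorem integral_mul_le_sqrt_integral_sq_mul_sqrt_integral_sq {f g : α → ℝ}
    (hf : MemLp f 2 μ) (hg : MemLp g 2 μ) :
    ∫ x, f x * g x ∂μ ≤ √(∫ x, f x ^ 2 ∂μ) * √(∫ x, g x ^ 2 ∂μ) := by
  have hfg : Integrable (fun x => f x * g x) μ := hf.integrable_mul hg
  calc ∫ x, f x * g x ∂μ ≤ ∫ x, ‖f x‖ * ‖g x‖ ∂μ :=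
        integral_mono hfg (by simpa only [norm_mul] using hfg.norm)
          fun x => (le_abs_self _).trans_eq (abs_mul _ _)
    _ ≤ (∫ x, ‖f x‖ ^ (2 : ℝ) ∂μ) ^ (1 / (2 : ℝ)) *
          (∫ x, ‖g x‖ ^ (2 : ℝ) ∂μ) ^ (1 / (2 : ℝ)) :=
        integral_mul_norm_le_Lp_mul_Lq HolderConjugate.two_two (by simpa using hf)
          (by simpa using hg)
    _ = _ := by simp only [rpow_two, norm_eq_abs, sq_abs, ← sqrt_eq_rpow]

theorem integral_weight_mul_mul_le_of_energy_bound {w F U : α → ℝ} {m M q : ℝ}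
    (hm : 0 < m) (hq : 0 < q) (hw : 0 ≤ w) (hF0 : 0 ≤ F) (hU0 : 0 ≤ U)
    (hF : MemLp F 2 μ) (hwF : MemLp (fun x => √(w x) * F x) 2 μ)
    (hwU : MemLp (fun x => √(w x) * U x) 2 μ)
    (hbounds : ∀ᵐ x ∂μ, F x ≠ 0 → m ≤ w x ∧ w x ≤ M)
    (henergy : q * ∫ x, w x * U x ^ 2 ∂μ ≤ ∫ x, F x * U x ∂μ) :
    ∫ x, w x * F x * U x ∂μ ≤ √(M / m) * q⁻¹ * ∫ x, F x ^ 2 ∂μ := by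
  have sq_sqrt_mul (x : α) (g : α → ℝ) : (√(w x) * g x) ^ 2 = w x * g x ^ 2 := by
    rw [mul_pow, sq_sqrt (hw x)]
  set F₂ := ∫ x, F x ^ 2 ∂μ
  set U_w := ∫ x, w x * U x ^ 2 ∂μ
  have hF₂ : 0 ≤ F₂ := integral_nonneg fun x => sq_nonneg _
  have hU_w : 0 ≤ U_w := integral_nonneg fun x => mul_nonneg (hw x) (sq_nonneg _)
  have hU_w_eq : U_w = ∫ x, (√(w x) * U x) ^ 2 ∂μ := by simp only [U_w, sq_sqrt_mul]
  have hG : ∫ x, (√(w x) * F x) ^ 2 ∂μ ≤ M * F₂ := by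
    rw [← MeasureTheory.integral_const_mul]
    refine integral_mono_ae hwF.integrable_sq (hF.integrable_sq.const_mul M) ?_
    filter_upwards [hbounds] with x hx
    rw [sq_sqrt_mul]
    rcases eq_or_ne (F x) 0 with h | h
    · simp [h]
    · exact mul_le_mul_of_nonneg_right (hx h).2 (sq_nonneg _)
  have hFU : ∫ x, F x * U x ∂μ ≤ (√m)⁻¹ * ∫ x, F x * (√(w x) * U x) ∂μ := by
    rw [← MeasureTheory.integral_const_mul]
    refine integral_mono_of_nonneg (ae_of_all _ fun x => mul_nonneg (hF0 x) (hU0 x))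
      ((hF.integrable_mul hwU).const_mul _) ?_
    filter_upwards [hbounds] with x hx
    rcases eq_or_ne (F x) 0 with h | h
    · simp [h]
    · have h1 : 1 ≤ (√m)⁻¹ * √(w x) := by
        rw [inv_mul_eq_div, one_le_div (sqrt_pos.2 hm)]
        exact sqrt_le_sqrt (hx h).1
      calc F x * U x ≤ ((√m)⁻¹ * √(w x)) * (F x * U x) :=
            le_mul_of_one_le_left (mul_nonneg (hF0 x) (hU0 x)) h1
        _ = _ := by ring
  have hU_bound : q * √U_w ≤ (√m)⁻¹ * √F₂ := by
    have h := henergy.trans (hFU.trans (mul_le_mul_of_nonneg_left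
      (integral_mul_le_sqrt_integral_sq_mul_sqrt_integral_sq hF hwU) (by positivity)))
    rw [← hU_w_eq] at h
    rcases (sqrt_nonneg U_w).eq_or_lt with h0 | h0
    · rw [← h0, mul_zero]; positivity
    · refine le_of_mul_le_mul_right ?_ h0
      calc q * √U_w * √U_w = q * U_w := by rw [mul_assoc, mul_self_sqrt hU_w]
        _ ≤ _ := h
        _ = _ := by ring
  calc ∫ x, w x * F x * U x ∂μ = ∫ x, (√(w x) * F x) * (√(w x) * U x) ∂μ := by
        congr 1 with x
        rw [mul_mul_mul_comm, mul_self_sqrt (hw x), mul_assoc]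
    _ ≤ √(∫ x, (√(w x) * F x) ^ 2 ∂μ) * √U_w := by
        rw [hU_w_eq]; exact integral_mul_le_sqrt_integral_sq_mul_sqrt_integral_sq hwF hwU
    _ ≤ (√M * √F₂) * (q⁻¹ * ((√m)⁻¹ * √F₂)) := by
        refine mul_le_mul ?_ ?_ (sqrt_nonneg _) (by positivity)
        · rw [← sqrt_mul' _ hF₂]; exact sqrt_le_sqrt hG
        · rw [le_inv_mul_iff₀ hq]; exact hU_bound
    _ = √(M / m) * q⁻¹ * F₂ := by
        rw [sqrt_div' _ hm.le]
        linear_combination (√M / √m * q⁻¹) * mul_self_sqrt hF₂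

end WeightedEstimate

theorem Function.Periodic.deriv {E : Type*} [NormedAddCommGroup E] [NormedSpace ℝ E]
    {f : ℝ → E} {c : ℝ} (hf : Function.Periodic f c) : Function.Periodic (deriv f) c := by
  intro x
  rw [← deriv_comp_add_const, show (fun y => f (y + c)) = f from funext hf]

theorem integral_conj_mul_deriv_deriv_eq_neg {u : ℝ → ℂ} {a b : ℝ} (hu : ContDiff ℝ 2 u)
    (hu_ab : u a = u b) (hu'_ab : deriv u a = deriv u b) :
    ∫ x in a..b, conj (u x) * deriv (deriv u) x =
      -((∫ x in a..b, ‖deriv u x‖ ^ 2 : ℝ) : ℂ) := by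
  have hu' : ContDiff ℝ 1 (deriv u) := hu.deriv'
  have hibp := integral_mul_deriv_eq_deriv_mul (a := a) (b := b) (u := fun x => conj (u x))
    (u' := fun x => conj (deriv u x)) (v := deriv u) (v' := deriv (deriv u))
    (fun x _ => by simpa using ((hu.differentiable two_ne_zero x).hasDerivAt).star)
    (fun x _ => (hu'.differentiable one_ne_zero x).hasDerivAt)
    ((Complex.continuous_conj.comp (hu.continuous_deriv one_le_two)).intervalIntegrable _ _)
    ((hu'.continuous_deriv le_rfl).intervalIntegrable _ _)
  rw [hibp, hu_ab, hu'_ab, sub_self, zero_sub, ← integral_ofReal]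
  push_cast
  simp_rw [Complex.conj_mul']

section DampedWaveOperator

variable {W : ℝ → ℝ} {u f : ℝ → ℂ} {q E : ℝ}

theorem im_integral_conj_mul_eq_mul_integral_weight {a b : ℝ} (hu : ContDiff ℝ 2 u)
    (hu_ab : u a = u b) (hu'_ab : deriv u a = deriv u b) (hW : IntervalIntegrable W volume a b)
    (hf : ∀ x, f x = -(deriv (deriv u) x) + Complex.I * q * W x * u x - E * u x) :
    (∫ x in a..b, conj (u x) * f x).im = q * ∫ x in a..b, W x * ‖u x‖ ^ 2 := by
  have hpt (x : ℝ) : conj (u x) * f x = -(conj (u x) * deriv (deriv u) x)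
      + ((q * (W x * ‖u x‖ ^ 2) : ℝ) : ℂ) * Complex.I - ((E * ‖u x‖ ^ 2 : ℝ) : ℂ) := by
    rw [hf]; push_cast; rw [← Complex.conj_mul']; ring
  have hWu : IntervalIntegrable (fun x => q * (W x * ‖u x‖ ^ 2)) volume a b :=
    (hW.mul_continuousOn (by fun_prop : Continuous fun x => ‖u x‖ ^ 2).continuousOn).const_mul q
  have h₁ : IntervalIntegrable (fun x => -(conj (u x) * deriv (deriv u) x)) volume a b := by
    have hu₂ := hu.deriv'.continuous_deriv le_rfl
    exact Continuous.intervalIntegrable (by fun_prop) a b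
  have h₂ : IntervalIntegrable (fun x => ((q * (W x * ‖u x‖ ^ 2) : ℝ) : ℂ) * Complex.I)
      volume a b :=
    IntervalIntegrable.mul_const ⟨hWu.1.ofReal, hWu.2.ofReal⟩ _
  have h₃ : IntervalIntegrable (fun x => ((E * ‖u x‖ ^ 2 : ℝ) : ℂ)) volume a b :=
    Continuous.intervalIntegrable (by fun_prop) a b
  simp_rw [hpt]
  rw [intervalIntegral.integral_sub (h₁.add h₂) h₃, intervalIntegral.integral_add h₁ h₂,
    intervalIntegral.integral_neg, intervalIntegral.integral_mul_const, integral_ofReal,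
    integral_ofReal, integral_conj_mul_deriv_deriv_eq_neg hu hu_ab hu'_ab]
  simp [intervalIntegral.integral_const_mul]

theorem mul_integral_weight_mul_norm_sq_le {a b : ℝ} (hab : a ≤ b) (hu : ContDiff ℝ 2 u)
    (hu_ab : u a = u b) (hu'_ab : deriv u a = deriv u b) (hW : IntervalIntegrable W volume a b)
    (hf : ∀ x, f x = -(deriv (deriv u) x) + Complex.I * q * W x * u x - E * u x) :
    q * ∫ x in a..b, W x * ‖u x‖ ^ 2 ≤ ∫ x in a..b, ‖f x‖ * ‖u x‖ := by
  rw [← im_integral_conj_mul_eq_mul_integral_weight hu hu_ab hu'_ab hW hf]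
  calc _ ≤ ‖∫ x in a..b, conj (u x) * f x‖ := Complex.im_le_norm _
    _ ≤ ∫ x in a..b, ‖conj (u x) * f x‖ := norm_integral_le_integral_norm hab
    _ = _ := by simp only [norm_mul, Complex.norm_conj, mul_comm]

theorem measurable_of_eq_neg_deriv_deriv_add (hu : ContDiff ℝ 2 u) (hW : Measurable W)
    (hf : ∀ x, f x = -(deriv (deriv u) x) + Complex.I * q * W x * u x - E * u x) :
    Measurable f := by
  have hu₀ := hu.continuous.measurable
  have hu₂ := (hu.deriv'.continuous_deriv le_rfl).measurable
  rw [funext hf]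
  fun_prop

theorem exists_bound_of_eq_neg_deriv_deriv_add {K : Set ℝ} {M : ℝ} (hK : IsCompact K)
    (hu : ContDiff ℝ 2 u) (hW0 : 0 ≤ W) (hWM : ∀ x, W x ≤ M)
    (hf : ∀ x, f x = -(deriv (deriv u) x) + Complex.I * q * W x * u x - E * u x) :
    ∃ C, ∀ x ∈ K, ‖f x‖ ≤ C := by
  have hu₀ := hu.continuous
  have hu₂ := hu.deriv'.continuous_deriv le_rfl
  obtain ⟨Cg, hCg⟩ := hK.exists_bound_of_continuousOn
    (f := fun x => -deriv (deriv u) x - E * u x) (by fun_prop)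
  obtain ⟨Ch, hCh⟩ := hK.exists_bound_of_continuousOn
    (f := fun x => Complex.I * q * u x) (by fun_prop)
  refine ⟨Cg + M * Ch, fun x hx => ?_⟩
  have hfx : f x = (-deriv (deriv u) x - E * u x) + W x * (Complex.I * q * u x) := by
    rw [hf]; ring
  calc ‖f x‖ ≤ ‖-deriv (deriv u) x - E * u x‖ + ‖(W x : ℂ) * (Complex.I * q * u x)‖ :=
        hfx ▸ norm_add_le _ _
    _ = ‖-deriv (deriv u) x - E * u x‖ + W x * ‖Complex.I * q * u x‖ := by
        rw [norm_mul, Complex.norm_of_nonneg (hW0 x)]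
    _ ≤ Cg + M * Ch := add_le_add (hCg x hx)
        (mul_le_mul (hWM x) (hCh x hx) (norm_nonneg _) ((hW0 x).trans (hWM x)))

end DampedWaveOperator

theorem dampV_mem_Icc {σ β a b x : ℝ} (ha : 0 < a) (hβ : 0 ≤ β) (hxa : σ + a ≤ |x|)
    (hxb : |x| ≤ σ + b) : dampV σ β x ∈ Icc (a ^ β) (b ^ β) := by
  rw [dampV, if_neg (by linarith)]
  exact ⟨rpow_le_rpow ha.le (by linarith) hβ, rpow_le_rpow (by linarith) (by linarith) hβ⟩

theorem mem_Icc_of_dampV_comparable {C₀ σ β a b x w : ℝ} (hC₀ : 0 < C₀) (ha : 0 < a)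
    (hβ : 0 ≤ β) (hw : dampV σ β x / C₀ ≤ w ∧ w ≤ C₀ * dampV σ β x) (hxa : σ + a ≤ |x|)
    (hxb : |x| ≤ σ + b) : w ∈ Icc (a ^ β / C₀) (C₀ * b ^ β) := by
  obtain ⟨hVa, hVb⟩ := dampV_mem_Icc ha hβ hxa hxb
  exact ⟨(div_le_div_of_nonneg_right hVa hC₀.le).trans hw.1,
    hw.2.trans (mul_le_mul_of_nonneg_left hVb hC₀.le)⟩

theorem sqrt_mul_rpow_div_rpow_div {c a b β : ℝ} (hc : 0 < c) (ha : 0 < a) (hb : 0 ≤ b) :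
    √(c * b ^ β / (a ^ β / c)) = c * (b / a) ^ (β / 2) := by
  have hsq : ((b / a) ^ (β / 2)) ^ 2 = (b / a) ^ β := by
    rw [← rpow_natCast, ← rpow_mul (div_nonneg hb ha.le)]; norm_num
  have haβ : 0 < a ^ β := rpow_pos_of_pos ha β
  rw [← sqrt_sq (by positivity : 0 ≤ c * (b / a) ^ (β / 2)), mul_pow, hsq, div_rpow hb ha.le]
  congr 1
  field_simp

theorem memLp_restrict_Ioc_of_bound {E : Type*} [NormedAddCommGroup E] {g : ℝ → E}
    {s t C : ℝ} {p : ENNReal} (hg : AEStronglyMeasurable g) (hC : ∀ x ∈ Icc s t, ‖g x‖ ≤ C) :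
    MemLp g p (volume.restrict (Ioc s t)) :=
  MemLp.of_bound hg.restrict C
    (ae_restrict_of_forall_mem measurableSet_Ioc fun x hx => hC x (Ioc_subset_Icc_self hx))

theorem memLp_restrict_Ioc_sqrt_mul_norm {W : ℝ → ℝ} {g : ℝ → ℂ} {s t M C : ℝ} {p : ENNReal}
    (hW : Measurable W) (hWM : ∀ x, W x ≤ M) (hg : Measurable g)
    (hC : ∀ x ∈ Icc s t, ‖g x‖ ≤ C) :
    MemLp (fun x => √(W x) * ‖g x‖) p (volume.restrict (Ioc s t)) :=
  memLp_restrict_Ioc_of_bound (hW.sqrt.mul hg.norm).aestronglyMeasurable (C := √M * C)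
    fun x hx => by
      rw [norm_mul, norm_norm, norm_of_nonneg (sqrt_nonneg _)]
      exact mul_le_mul (sqrt_le_sqrt (hWM x)) (hC x hx) (norm_nonneg _) (sqrt_nonneg _)

theorem damped_wave_Wfu_support_estimate_general
    (C₀ σ β : ℝ) (hC₀ : 0 < C₀) (hβ : 0 ≤ β)
    (W : ℝ → ℝ) (hWmeas : Measurable W)
    (hWbdd : ∃ M : ℝ, ∀ x : ℝ, W x ≤ M) (hWnonneg : ∀ x : ℝ, 0 ≤ W x)
    (hWV : ∀ x ∈ Set.Icc (-π) π,
      dampV σ β x / C₀ ≤ W x ∧ W x ≤ C₀ * dampV σ β x)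
    (a b : ℝ) (ha : 0 < a) (hab : a ≤ b)
    (q E : ℝ) (hq : 0 < q)
    (u f : ℝ → ℂ) (hu : ContDiff ℝ 2 u) (huper : Function.Periodic u (2 * π))
    (hf : ∀ x : ℝ,
      f x = -(deriv (deriv u) x) + Complex.I * q * W x * u x - E * u x)
    (hfsupp : ∀ x ∈ Set.Icc (-π) π, |x| < σ + a ∨ σ + b < |x| → f x = 0) :
    ∫ x in (-π)..π, W x * ‖f x‖ * ‖u x‖ ≤
      C₀ * (b / a) ^ (β / 2) * q⁻¹ * ∫ x in (-π)..π, ‖f x‖ ^ 2 := by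
  have hπ : -π ≤ π := by linarith [pi_pos]
  obtain ⟨M, hWM⟩ := hWbdd
  have hfm := measurable_of_eq_neg_deriv_deriv_add hu hWmeas hf
  obtain ⟨Cf, hCf⟩ := exists_bound_of_eq_neg_deriv_deriv_add isCompact_Icc hu hWnonneg hWM hf
  obtain ⟨Cu, hCu⟩ := isCompact_Icc.exists_bound_of_continuousOn hu.continuous.continuousOn
  have hWint : IntervalIntegrable W volume (-π) π :=
    (intervalIntegrable_iff_integrableOn_Ioc_of_le hπ).2 <|
      (memLp_restrict_Ioc_of_bound hWmeas.aestronglyMeasurable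
        fun x _ => (norm_of_nonneg (hWnonneg x)).trans_le (hWM x)).integrable le_rfl
  have henergy := mul_integral_weight_mul_norm_sq_le hπ hu
    (by rw [← huper (-π)]; ring_nf) (by rw [← huper.deriv (-π)]; ring_nf) hWint hf
  have hsupp : ∀ᵐ x ∂volume.restrict (Ioc (-π) π),
      ‖f x‖ ≠ 0 → a ^ β / C₀ ≤ W x ∧ W x ≤ C₀ * b ^ β := by
    refine ae_restrict_of_forall_mem measurableSet_Ioc fun x hx hfx => ?_
    have hx' := Ioc_subset_Icc_self hx
    obtain ⟨hxa, hxb⟩ := not_or.1 (mt (hfsupp x hx') (norm_ne_zero_iff.1 hfx))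
    exact mem_Icc_of_dampV_comparable hC₀ ha hβ (hWV x hx') (not_lt.1 hxa) (not_lt.1 hxb)
  rw [integral_of_le hπ, integral_of_le hπ] at henergy ⊢
  rw [← sqrt_mul_rpow_div_rpow_div hC₀ ha (ha.le.trans hab)]
  exact integral_weight_mul_mul_le_of_energy_bound (by positivity) hq hWnonneg
    (fun x => norm_nonneg _) (fun x => norm_nonneg _)
    (memLp_restrict_Ioc_of_bound hfm.norm.aestronglyMeasurable (by simpa using hCf))
    (memLp_restrict_Ioc_sqrt_mul_norm hWmeas hWM hfm hCf)
    (memLp_restrict_Ioc_sqrt_mul_norm hWmeas hWM hu.continuous.measurable hCu) hsupp henergy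

/-- If `f` vanishes on `{x ∈ [-π,π] : |x| < σ + a or |x| > σ + b}` with
`0 < a ≤ b ≤ π - σ`, then `∫ W |f| |u| ≤ C₀ (b/a)^{β/2} q⁻¹ ∫ |f|²`. -/
theorem damped_wave_Wfu_support_estimate
    (C₀ σ β : ℝ) (hC₀ : 0 < C₀) (hσ : σ ∈ Set.Ioo 0 π) (hβ : 0 ≤ β)
    (W : ℝ → ℝ) (hWper : Function.Periodic W (2 * π)) (hWmeas : Measurable W)
    (hWbdd : ∃ M : ℝ, ∀ x : ℝ, W x ≤ M) (hWnonneg : ∀ x : ℝ, 0 ≤ W x)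
    (hWV : ∀ x ∈ Set.Icc (-π) π,
      dampV σ β x / C₀ ≤ W x ∧ W x ≤ C₀ * dampV σ β x)
    (a b : ℝ) (ha : 0 < a) (hab : a ≤ b) (hb : b ≤ π - σ)
    (q E : ℝ) (hq : 0 < q)
    (u f : ℝ → ℂ) (hu : ContDiff ℝ 2 u) (huper : Function.Periodic u (2 * π))
    (hf : ∀ x : ℝ,
      f x = -(deriv (deriv u) x) + Complex.I * q * W x * u x - E * u x)
    (hfsupp : ∀ x ∈ Set.Icc (-π) π, |x| < σ + a ∨ σ + b < |x| → f x = 0) :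
    ∫ x in (-π)..π, W x * ‖f x‖ * ‖u x‖ ≤
      C₀ * (b / a) ^ (β / 2) * q⁻¹ * ∫ x in (-π)..π, ‖f x‖ ^ 2 :=
  damped_wave_Wfu_support_estimate_general C₀ σ β hC₀ hβ W hWmeas hWbdd hWnonneg hWV a b ha hab q E
    hq u f hu huper hf hfsupp
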